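/- arXiv:2108.05990 — 2 statements merged into one kernel-verified Lean document; each statement's English description precedes it below -/
import Mathlib

section
/- Let g be the tooth function on [0,1] (g(x)=2x for x<1/2, g(x)=2(1-x) for x≥1/2), g_r its r-fold composition, and f_R(x) = x - Σ_{r=1}^{R} g_r(x)/2^{2r}. Then for every x∈[0,1], |f_R(x) - x²| ≤ 2^{-2R-2}. -/
/-! Since `g y - g y ^ 2 = 4 (y - y ^ 2) - g y` for the tooth function, the error
`x - ∑_{r ≤ N} g_r x / 4 ^ r - x ^ 2` telescopes to `(z - z ^ 2) / 4 ^ N` with `z = g_N x`;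
as `g` maps `[0, 1]` into itself, `z ∈ [0, 1]` and so `0 ≤ z - z ^ 2 ≤ 1 / 4`. -/

open Set

lemma sub_sum_iterate_div_sub_sq {g : ℝ → ℝ}
    (hg : ∀ y, g y - g y ^ 2 = 4 * (y - y ^ 2) - g y) (x : ℝ) (N : ℕ) :
    x - ∑ r ∈ Finset.Icc 1 N, g^[r] x / 2 ^ (2 * r) - x ^ 2
      = (g^[N] x - (g^[N] x) ^ 2) / 2 ^ (2 * N) := by
  induction N with
  | zero => simp
  | succ N ih =>
    rw [Finset.sum_Icc_succ_top (by omega), Function.iterate_succ_apply', hg,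
      show 2 * (N + 1) = 2 * N + 2 by ring, pow_add]
    field_simp at ih ⊢
    linarith

lemma abs_sub_sq_le_of_mem_Icc {z : ℝ} (hz : z ∈ Icc (0 : ℝ) 1) : |z - z ^ 2| ≤ 1 / 4 := by
  obtain ⟨hz0, hz1⟩ := hz
  rw [abs_of_nonneg (by nlinarith)]
  nlinarith [sq_nonneg (z - 1 / 2)]

section Tooth

variable {g : ℝ → ℝ} (hg1 : ∀ x, x < 1 / 2 → g x = 2 * x)
  (hg2 : ∀ x, 1 / 2 ≤ x → g x = 2 * (1 - x))
include hg1 hg2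

lemma tooth_sub_sq (y : ℝ) : g y - g y ^ 2 = 4 * (y - y ^ 2) - g y := by
  rcases lt_or_ge y (1 / 2) with hy | hy
  · rw [hg1 y hy]; ring
  · rw [hg2 y hy]; ring

lemma mapsTo_tooth_Icc : MapsTo g (Icc 0 1) (Icc 0 1) := by
  rintro y ⟨hy0, hy1⟩
  rcases lt_or_ge y (1 / 2) with hy | hy
  · rw [hg1 y hy]; constructor <;> linarith
  · rw [hg2 y hy]; constructor <;> linarith

end Tooth

theorem approx_square_general (R : ℕ) (g : ℝ → ℝ)
    (hg1 : ∀ x, x < 1/2 → g x = 2 * x)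
    (hg2 : ∀ x, 1/2 ≤ x → g x = 2 * (1 - x))
    (fR : ℝ → ℝ)
    (hfR : ∀ x, fR x = x - ∑ r ∈ Finset.Icc 1 R, g^[r] x / 2 ^ (2 * r)) :
    ∀ x ∈ Set.Icc (0:ℝ) 1, |fR x - x ^ 2| ≤ (2:ℝ) ^ (-(2 * (R:ℝ)) - 2) := by
  intro x hx
  have hbound : (2:ℝ) ^ (-(2 * (R:ℝ)) - 2) = (1 / 4) / 2 ^ (2 * R) := by
    rw [show -(2 * (R:ℝ)) - 2 = -((2 * R + 2 : ℕ) : ℝ) by push_cast; ring,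
      Real.rpow_neg zero_le_two, Real.rpow_natCast, pow_add]
    norm_num [div_eq_mul_inv, mul_comm]
  rw [hfR, sub_sum_iterate_div_sub_sq (tooth_sub_sq hg1 hg2), hbound, abs_div,
    abs_of_pos (by positivity : (0:ℝ) < 2 ^ (2 * R))]
  gcongr
  exact abs_sub_sq_le_of_mem_Icc ((mapsTo_tooth_Icc hg1 hg2).iterate R hx)

/-- |f_R(x) - x²| ≤ 2^{-2R-2} for x ∈ [0,1], where f_R(x) = x - Σ_{r=1}^R g_r(x)/2^{2r}
and g_r is the r-fold iterate of the tooth function. -/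
theorem approx_square (R : ℕ) (hR : 1 ≤ R) (g : ℝ → ℝ)
    (hg1 : ∀ x, x < 1/2 → g x = 2 * x)
    (hg2 : ∀ x, 1/2 ≤ x → g x = 2 * (1 - x))
    (fR : ℝ → ℝ)
    (hfR : ∀ x, fR x = x - ∑ r ∈ Finset.Icc 1 R, g^[r] x / 2 ^ (2 * r)) :
    ∀ x ∈ Set.Icc (0:ℝ) 1, |fR x - x ^ 2| ≤ (2:ℝ) ^ (-(2 * (R:ℝ)) - 2) :=
  approx_square_general R g hg1 hg2 fR hfR
end

section
/- For integers m ≥ 0 and d ≥ 1, Σ_{k=0}^{m} 2^k · C(d-1+k, d-1) = (-1)^d + 2^{m+1} Σ_{k=0}^{d-1} C(m+d, k) (-2)^{d-1-k}. -/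
/-!
Put `x = 2`, `y = -1`, so `x + y = 1`. The identity is then the duality between the negative
binomial and the binomial distribution: for `x + y = 1`,
`y^(n+1) ∑_{k ≤ m} C(n+k, n) x^k + x^(m+1) ∑_{i+j=n} C(m+n+1, i) y^i x^j = 1`.
For `m = 0` this is the binomial expansion of `(x + y)^(n+1)`, and Pascal's rule shows that the
left-hand side does not change when `m` increases.
-/

open Finset

section

variable {R : Type*} [CommRing R]

/-- For `n ≤ N`: the terms `i ≤ n` of the expansion of `(x + y) ^ N`, divided by
`x ^ (N - n)`. -/
def truncatedBinomialSum (x y : R) (N n : ℕ) : R :=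
  ∑ p ∈ antidiagonal n, (N.choose p.1 : R) * y ^ p.1 * x ^ p.2

variable (x y : R)

theorem truncatedBinomialSum_self (N : ℕ) : truncatedBinomialSum x y N N = (x + y) ^ N := by
  rw [add_comm, (Commute.all y x).add_pow', truncatedBinomialSum]
  refine sum_congr rfl fun p _ => ?_
  rw [nsmul_eq_mul, mul_assoc]

theorem truncatedBinomialSum_succ_right (N n : ℕ) :
    truncatedBinomialSum x y N (n + 1) =
      x * truncatedBinomialSum x y N n + N.choose (n + 1) * y ^ (n + 1) := by
  rw [truncatedBinomialSum, Nat.sum_antidiagonal_succ', truncatedBinomialSum, mul_sum]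
  simp only [pow_zero, mul_one, pow_succ]
  rw [add_comm]
  congr 1
  exact sum_congr rfl fun p _ => by ring

theorem truncatedBinomialSum_succ_succ (N n : ℕ) :
    truncatedBinomialSum x y (N + 1) (n + 1) =
      y * truncatedBinomialSum x y N n + truncatedBinomialSum x y N (n + 1) := by
  simp only [truncatedBinomialSum, Nat.sum_antidiagonal_succ, Nat.choose_succ_succ', Nat.cast_add,
    Nat.choose_zero_right, mul_sum]
  rw [add_left_comm, ← sum_add_distrib]
  congr 1
  exact sum_congr rfl fun p _ => by ring

theorem truncatedBinomialSum_eq_mul_succ_add (hxy : x + y = 1) (N n : ℕ) :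
    truncatedBinomialSum x y N n =
      x * truncatedBinomialSum x y (N + 1) n + N.choose n * y ^ (n + 1) := by
  have hpascal := truncatedBinomialSum_succ_succ x y N n
  rw [truncatedBinomialSum_succ_right, truncatedBinomialSum_succ_right, Nat.choose_succ_succ,
    Nat.cast_add] at hpascal
  linear_combination -hpascal - truncatedBinomialSum x y N n * hxy

variable {x y} in
theorem sum_pow_mul_choose_mul_add_pow_mul_truncatedBinomialSum (hxy : x + y = 1) (m n : ℕ) :
    (∑ k ∈ range (m + 1), x ^ k * ((n + k).choose n : R)) * y ^ (n + 1) +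
      x ^ (m + 1) * truncatedBinomialSum x y (m + n + 1) n = 1 := by
  induction m with
  | zero =>
    have hbinom := truncatedBinomialSum_succ_right x y (n + 1) n
    rw [truncatedBinomialSum_self, hxy, one_pow, Nat.choose_self, Nat.cast_one] at hbinom
    simpa [add_comm] using hbinom.symm
  | succ m ih =>
    have hstep := truncatedBinomialSum_eq_mul_succ_add x y hxy (m + n + 1) n
    rw [sum_range_succ, show n + (m + 1) = m + n + 1 by omega,
      show m + 1 + n + 1 = m + n + 1 + 1 by omega]
    linear_combination ih - x ^ (m + 1) * hstep

end

theorem neg_one_pow_mul_truncatedBinomialSum_two_neg_one (N n : ℕ) :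
    (-1) ^ n * truncatedBinomialSum (2 : ℤ) (-1) N n =
      ∑ k ∈ range (n + 1), (N.choose k : ℤ) * (-2) ^ (n - k) := by
  rw [truncatedBinomialSum, mul_sum,
    ← Nat.sum_antidiagonal_eq_sum_range_succ fun i j => (N.choose i : ℤ) * (-2) ^ j]
  refine sum_congr rfl fun p hp => ?_
  rw [← mem_antidiagonal.mp hp, neg_pow (2 : ℤ) p.2]
  have hsq : (-1 : ℤ) ^ p.1 * (-1) ^ p.1 = 1 := pow_mul_pow_eq_one _ (by norm_num)
  linear_combination (N.choose p.1 : ℤ) * (-1) ^ p.2 * 2 ^ p.2 * hsq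

/-- Identity (3.62): Σ_{k=0}^m 2^k C(d-1+k,d-1) = (-1)^d + 2^{m+1} Σ_{k=0}^{d-1} C(m+d,k)(-2)^{d-1-k}. -/
theorem binom_geom_identity (m d : ℕ) (hd : 1 ≤ d) :
    ∑ k ∈ Finset.range (m + 1), (2:ℤ) ^ k * ((d - 1 + k).choose (d - 1) : ℤ) =
      (-1) ^ d + 2 ^ (m + 1) *
        ∑ k ∈ Finset.range d, ((m + d).choose k : ℤ) * (-2) ^ (d - 1 - k) := by
  obtain ⟨n, rfl⟩ := Nat.exists_eq_add_of_le' hd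
  have hdual := sum_pow_mul_choose_mul_add_pow_mul_truncatedBinomialSum
    (show (2 : ℤ) + -1 = 1 by norm_num) m n
  have hsign := neg_one_pow_mul_truncatedBinomialSum_two_neg_one (m + n + 1) n
  have hsq : (-1 : ℤ) ^ n * (-1) ^ n = 1 := pow_mul_pow_eq_one _ (by norm_num)
  rw [Nat.add_sub_cancel, ← add_assoc, ← hsign]
  linear_combination (-1) ^ (n + 1) * hdual -
    (∑ k ∈ range (m + 1), (2 : ℤ) ^ k * ((n + k).choose n : ℤ)) * hsq
end
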